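/- arXiv:2312.09485 — 3 statements merged into one kernel-verified Lean document; each statement's English description precedes it below -/
import Mathlib

section
/- Let m be a positive integer and λ a rational (or real) parameter. Define the degenerate Whitney numbers of the second kind by W_{m,λ}(n,k) = (1/(m^k k!)) Σ_{j=0}^{k} C(k,j) (-1)^{k-j} (mj+1)_{n,λ}. Then for all natural numbers n and all x, (mx+1)_{n,λ} = Σ_{k=0}^{n} W_{m,λ}(n,k) m^k (x)_k, as a polynomial identity in x. -/
/-- The degenerate falling factorial `(x)_{n,λ} = x(x-λ)⋯(x-(n-1)λ)`, with `(x)_{0,λ} = 1`. -/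
def degFall (x lam : ℝ) (n : ℕ) : ℝ :=
  ∏ i ∈ Finset.range n, (x - (i : ℝ) * lam)

/-- The ordinary falling factorial `(x)_k = x(x-1)⋯(x-k+1)`, with `(x)_0 = 1`. -/
def fallFact (x : ℝ) (k : ℕ) : ℝ :=
  ∏ i ∈ Finset.range k, (x - (i : ℝ))

/-- The degenerate Whitney numbers of the second kind
`W_{m,λ}(n,k) = (1/(mᵏ k!)) Σ_{j=0}^k C(k,j) (-1)^{k-j} (mj+1)_{n,λ}`. -/
noncomputable def degWhitney (m : ℕ) (lam : ℝ) (n k : ℕ) : ℝ :=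
  (1 / ((m : ℝ) ^ k * (k.factorial : ℝ))) *
    ∑ j ∈ Finset.range (k + 1),
      (k.choose j : ℝ) * (-1 : ℝ) ^ (k - j) * degFall ((m : ℝ) * (j : ℝ) + 1) lam n

/-!
The map `p : x ↦ (mx+1)_{n,λ}` is a polynomial of degree at most `n`, so Newton's
forward-difference formula expands it as `p x = Σ_{k ≤ n} Δᵏp(0)/k! · (x)_k`. Expanding
`Δᵏ = (shift - 1)ᵏ` by the binomial theorem gives
`Δᵏp(0) = Σ_j C(k,j) (-1)^{k-j} p(j)`, which is `k! mᵏ W_{m,λ}(n,k)`.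
-/

open Finset Polynomial fwdDiff
open scoped Nat

theorem Polynomial.eval_eq_sum_fwdDiff_iter_mul_descPochhammer {K : Type*} [Field K] [CharZero K]
    (P : K[X]) {n : ℕ} (hP : P.natDegree ≤ n) (x : K) :
    P.eval x = ∑ k ∈ range (n + 1), Δ_[1] ^[k] P.eval 0 / k ! * (descPochhammer K k).eval x := by
  set Q : K[X] := ∑ k ∈ range (n + 1), C (Δ_[1] ^[k] P.eval 0 / k !) * descPochhammer K k
  have hQ (y : K) : Q.eval y =
      ∑ k ∈ range (n + 1), Δ_[1] ^[k] P.eval 0 / k ! * (descPochhammer K k).eval y := by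
    simp only [Q, eval_finsetSum, eval_mul, eval_C]
  suffices P = Q by rw [← hQ, this]
  refine eq_of_infinite_eval_eq P Q (Set.infinite_of_injective_forall_mem
    (Nat.cast_injective (R := K)) fun N ↦ ?_)
  -- At `x = N` this is the Gregory–Newton formula, truncated at `N` by `C(N,k)` and at `n` by
  -- the degree of `P`.
  let g k := (N.choose k : K) * Δ_[1] ^[k] P.eval 0
  have hg_N : ∀ k ≥ N + 1, g k = 0 := fun k hk ↦ by simp [g, Nat.choose_eq_zero_of_lt hk]
  have hg_n : ∀ k ≥ n + 1, g k = 0 := fun k hk ↦ by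
    simp [g, fwdDiff_iter_eq_zero_of_degree_lt (by omega : P.natDegree < k)]
  calc P.eval (N : K) = ∑ k ∈ range (N + 1), g k := by
        simpa using shift_eq_sum_fwdDiff_iter 1 P.eval N 0
    _ = ∑ k ∈ range (n + 1), g k := by
      rw [← eventually_constant_sum hg_N (Nat.le_add_right (N + 1) n),
        eventually_constant_sum hg_n (by omega)]
    _ = Q.eval (N : K) := by
      rw [hQ]
      refine sum_congr rfl fun k _ ↦ ?_
      rw [descPochhammer_eval_eq_descFactorial, Nat.descFactorial_eq_factorial_mul_choose]
      have : (k ! : K) ≠ 0 := Nat.cast_ne_zero.mpr k.factorial_ne_zero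
      push_cast
      simp only [g]
      field_simp

lemma exists_natDegree_le_eval_eq_degFall (a b lam : ℝ) (n : ℕ) :
    ∃ P : ℝ[X], P.natDegree ≤ n ∧ ∀ y, P.eval y = degFall (a * y + b) lam n := by
  refine ⟨∏ i ∈ range n, (C a * X + C (b - i * lam)), ?_, ?_⟩
  · refine (natDegree_prod_le _ _).trans ?_
    simpa using sum_le_card_nsmul (range n) _ 1 fun (i : ℕ) _ ↦
      natDegree_linear_le (a := a) (b := b - i * lam)
  · intro y
    simp only [degFall, eval_prod, eval_add, eval_mul, eval_C, eval_X]
    exact prod_congr rfl fun i _ ↦ by ring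

lemma fallFact_eq_descPochhammer_eval (x : ℝ) (k : ℕ) :
    fallFact x k = (descPochhammer ℝ k).eval x :=
  (descPochhammer_eval_eq_prod_range k x).symm

lemma degWhitney_mul_pow_eq_fwdDiff_iter_div_factorial {m : ℕ} (hm : m ≠ 0) (lam : ℝ)
    (n k : ℕ) :
    degWhitney m lam n k * (m : ℝ) ^ k =
      Δ_[1] ^[k] (fun y ↦ degFall (m * y + 1) lam n) 0 / k ! := by
  have : (m : ℝ) ^ k ≠ 0 := pow_ne_zero _ (Nat.cast_ne_zero.mpr hm)
  rw [fwdDiff_iter_eq_sum_shift, degWhitney]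
  field_simp
  refine sum_congr rfl fun j _ ↦ ?_
  simp only [zsmul_eq_mul, zero_add, nsmul_eq_mul, mul_one]
  push_cast
  ring

/-- `(mx+1)_{n,λ} = Σ_{k=0}^n W_{m,λ}(n,k) mᵏ (x)_k` for all real `x`. -/
theorem degFall_eq_sum_degWhitney (m : ℕ) (hm : 0 < m) (lam : ℝ) (n : ℕ) (x : ℝ) :
    degFall ((m : ℝ) * x + 1) lam n =
      ∑ k ∈ Finset.range (n + 1), degWhitney m lam n k * (m : ℝ) ^ k * fallFact x k := by
  obtain ⟨P, hdeg, heval⟩ := exists_natDegree_le_eval_eq_degFall m 1 lam n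
  rw [← heval, P.eval_eq_sum_fwdDiff_iter_mul_descPochhammer hdeg x, funext heval]
  refine sum_congr rfl fun k _ ↦ ?_
  rw [degWhitney_mul_pow_eq_fwdDiff_iter_div_factorial hm.ne', fallFact_eq_descPochhammer_eval]
end

section
/- Dobinski-type formula for degenerate Dowling polynomials: let m be a positive integer, λ real, and define W_{m,λ}(n,k) = (1/(m^k k!)) Σ_{j=0}^{k} C(k,j)(-1)^{k-j}(mj+1)_{n,λ} and D_{m,λ}(n,x) = Σ_{k=0}^{n} W_{m,λ}(n,k) x^k. Then for every real x and every n ≥ 0, the series Σ_{k=0}^{∞} (x^k/(m^k k!)) (mk+1)_{n,λ} converges and D_{m,λ}(n,x) = e^{-x/m} Σ_{k=0}^{∞} (x^k/(m^k k!)) (mk+1)_{n,λ}. -/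
/-- The degenerate Dowling polynomials `D_{m,λ}(n,x) = Σ_{k=0}^n W_{m,λ}(n,k) xᵏ`. -/
noncomputable def degDowling (m : ℕ) (lam : ℝ) (n : ℕ) (x : ℝ) : ℝ :=
  ∑ k ∈ Finset.range (n + 1), degWhitney m lam n k * x ^ k

/-!
Put `y = x / m` and `f t = (m t + 1)_{n,λ}`, a polynomial of degree `n` in `t`. The Whitney sum is
an iterated forward difference: `W_{m,λ}(n,k) xᵏ = yᵏ / k! · Δᵏ f 0`. Multiplying `Σ yᵏ / k! · f k`
by `e^{-y} = Σ (-y)ʲ / j!` as a Cauchy product gives Newton's series `Σ yᴺ / N! · Δᴺ f 0`, which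
stops at `N = n` since `Δᴺ` annihilates polynomials of degree `< N`.
-/

open Finset Polynomial Nat fwdDiff

theorem summable_pow_div_factorial_mul_pow (y : ℝ) (i : ℕ) :
    Summable fun k : ℕ => y ^ k / k ! * (k : ℝ) ^ i := by
  refine Summable.of_norm_bounded (Real.summable_pow_div_factorial (2 ^ i * |y|)) fun k => ?_
  have hk : (k : ℝ) ^ i ≤ (2 ^ i) ^ k := by
    rw [← pow_mul, mul_comm, pow_mul]
    exact pow_le_pow_left₀ k.cast_nonneg (by exact_mod_cast k.lt_two_pow_self.le) i
  rw [Real.norm_eq_abs, abs_mul, abs_div, abs_pow, Nat.abs_cast, abs_pow, Nat.abs_cast]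
  calc |y| ^ k / k ! * (k : ℝ) ^ i ≤ |y| ^ k / k ! * (2 ^ i) ^ k := by gcongr
    _ = (2 ^ i * |y|) ^ k / k ! := by ring

theorem Polynomial.summable_pow_div_factorial_mul_eval (P : ℝ[X]) (y : ℝ) :
    Summable fun k : ℕ => y ^ k / k ! * P.eval (k : ℝ) := by
  simp_rw [eval_eq_sum_range, mul_sum]
  refine summable_sum fun i _ => ?_
  simpa only [mul_left_comm] using (summable_pow_div_factorial_mul_pow y i).mul_left (P.coeff i)

theorem sum_antidiagonal_pow_div_factorial_mul (f : ℝ → ℝ) (y : ℝ) (N : ℕ) :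
    ∑ p ∈ antidiagonal N, (-y) ^ p.1 / p.1 ! * (y ^ p.2 / p.2 ! * f p.2) =
      y ^ N / N ! * Δ_[1] ^[N] f 0 := by
  rw [fwdDiff_iter_eq_sum_shift, mul_sum, ← Nat.sum_antidiagonal_swap,
    Nat.sum_antidiagonal_eq_sum_range_succ_mk]
  refine sum_congr rfl fun k hk => ?_
  have hk : k ≤ N := Nat.lt_succ_iff.mp (mem_range.mp hk)
  obtain ⟨j, rfl⟩ := Nat.exists_eq_add_of_le hk
  simp only [Prod.swap_prod_mk, zsmul_eq_mul, nsmul_eq_mul, zero_add, mul_one,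
    Nat.add_sub_cancel_left]
  push_cast
  rw [neg_pow, pow_add]
  field_simp
  rw [← Nat.choose_mul_factorial_mul_factorial hk, Nat.add_sub_cancel_left]
  push_cast
  ring

theorem exp_neg_mul_tsum_eq_tsum_fwdDiff {f : ℝ → ℝ} {y : ℝ}
    (hf : Summable fun k : ℕ => y ^ k / k ! * f k) :
    Real.exp (-y) * ∑' k : ℕ, y ^ k / k ! * f k = ∑' N : ℕ, y ^ N / N ! * Δ_[1] ^[N] f 0 := by
  have hexp : Summable fun k : ℕ => ‖(-y) ^ k / (k ! : ℝ)‖ :=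
    summable_norm_iff.mpr (Real.summable_pow_div_factorial (-y))
  rw [Real.exp_eq_exp_ℝ, NormedSpace.exp_eq_tsum_div,
    tsum_mul_tsum_eq_tsum_sum_antidiagonal_of_summable_norm hexp (summable_norm_iff.mpr hf)]
  exact tsum_congr (sum_antidiagonal_pow_div_factorial_mul f y)

theorem Polynomial.exp_neg_mul_tsum_eval_eq_sum {P : ℝ[X]} {n : ℕ} (hP : P.natDegree ≤ n)
    (y : ℝ) :
    Real.exp (-y) * ∑' k : ℕ, y ^ k / k ! * P.eval (k : ℝ) =
      ∑ k ∈ range (n + 1), y ^ k / k ! * Δ_[1] ^[k] P.eval 0 := by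
  rw [exp_neg_mul_tsum_eq_tsum_fwdDiff (f := P.eval) (P.summable_pow_div_factorial_mul_eval y)]
  refine tsum_eq_sum fun k hk => ?_
  have hk : n < k := by simpa using hk
  rw [fwdDiff_iter_eq_zero_of_degree_lt (hP.trans_lt hk), Pi.zero_apply, mul_zero]

noncomputable def degFallPoly (lam : ℝ) (n : ℕ) : ℝ[X] :=
  ∏ i ∈ range n, (X - C ((i : ℝ) * lam))

theorem eval_degFallPoly (x lam : ℝ) (n : ℕ) : (degFallPoly lam n).eval x = degFall x lam n := by
  simp [degFallPoly, degFall, eval_prod]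

theorem natDegree_degFallPoly (lam : ℝ) (n : ℕ) : (degFallPoly lam n).natDegree = n := by
  rw [degFallPoly, natDegree_prod_of_monic _ _ fun i _ => monic_X_sub_C _]
  simp only [natDegree_X_sub_C, sum_const, card_range, smul_eq_mul, mul_one]

theorem degWhitney_mul_pow (m : ℕ) (lam x : ℝ) (n k : ℕ) :
    degWhitney m lam n k * x ^ k =
      (x / m) ^ k / k ! * Δ_[1] ^[k] (fun t : ℝ => degFall (m * t + 1) lam n) 0 := by
  simp only [degWhitney, fwdDiff_iter_eq_sum_shift, mul_sum, sum_mul, zsmul_eq_mul, nsmul_eq_mul,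
    zero_add, mul_one]
  push_cast
  exact sum_congr rfl fun j _ => by ring

theorem degDowling_dobinski_general (m : ℕ) (lam x : ℝ) (n : ℕ) :
    Summable (fun k : ℕ =>
      x ^ k / ((m : ℝ) ^ k * (k.factorial : ℝ)) * degFall ((m : ℝ) * (k : ℝ) + 1) lam n) ∧
    degDowling m lam n x =
      Real.exp (-x / (m : ℝ)) *
        ∑' k : ℕ,
          x ^ k / ((m : ℝ) ^ k * (k.factorial : ℝ)) * degFall ((m : ℝ) * (k : ℝ) + 1) lam n := by
  set P : ℝ[X] := (degFallPoly lam n).comp (C (m : ℝ) * X + C 1)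
  have hP : ∀ t, P.eval t = degFall (m * t + 1) lam n := by
    intro t
    simp [P, eval_comp, eval_degFallPoly]
  have hPdeg : P.natDegree ≤ n :=
    calc P.natDegree = n * (C (m : ℝ) * X + C 1).natDegree := by
          rw [natDegree_comp, natDegree_degFallPoly]
      _ ≤ n := (Nat.mul_le_mul_left n natDegree_linear_le).trans_eq (mul_one n)
  have hterm : (fun k : ℕ => x ^ k / ((m : ℝ) ^ k * (k.factorial : ℝ)) *
      degFall ((m : ℝ) * (k : ℝ) + 1) lam n) = fun k => (x / m) ^ k / k ! * P.eval (k : ℝ) := by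
    simp only [hP, div_pow, div_div]
  rw [hterm]
  refine ⟨P.summable_pow_div_factorial_mul_eval _, ?_⟩
  rw [neg_div, P.exp_neg_mul_tsum_eval_eq_sum hPdeg, degDowling, funext hP]
  exact sum_congr rfl fun k _ => degWhitney_mul_pow m lam x n k

/-- Dobinski-type formula:
`D_{m,λ}(n,x) = e^{-x/m} Σ_{k=0}^∞ (xᵏ/(mᵏ k!)) (mk+1)_{n,λ}`, with convergence. -/
theorem degDowling_dobinski (m : ℕ) (hm : 0 < m) (lam x : ℝ) (n : ℕ) :
    Summable (fun k : ℕ =>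
      x ^ k / ((m : ℝ) ^ k * (k.factorial : ℝ)) * degFall ((m : ℝ) * (k : ℝ) + 1) lam n) ∧
    degDowling m lam n x =
      Real.exp (-x / (m : ℝ)) *
        ∑' k : ℕ,
          x ^ k / ((m : ℝ) ^ k * (k.factorial : ℝ)) * degFall ((m : ℝ) * (k : ℝ) + 1) lam n :=
  degDowling_dobinski_general m lam x n
end

section
/- Convolution identity showing the degenerate Dowling polynomials fail the binomial identity (Theorem 2.9, Y = 1): with D_{m,λ}(n,x) = Σ_{k=0}^{n} W_{m,λ}(n,k) x^k where W_{m,λ}(n,k) = (1/(m^k k!)) Σ_{j=0}^{k} C(k,j)(-1)^{k-j}(mj+1)_{n,λ}, one has for all n ≥ 0 and all x, y: Σ_{k=0}^{n} C(n,k) (1)_{n-k,λ} D_{m,λ}(k, x+y) = Σ_{k=0}^{n} C(n,k) D_{m,λ}(n-k, x) D_{m,λ}(k, y). -/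
open Finset Polynomial fwdDiff

lemma degFall_succ (x lam : ℝ) (n : ℕ) :
    degFall x lam (n + 1) = degFall x lam n * (x - n * lam) :=
  prod_range_succ _ n

theorem degFall_add (a b lam : ℝ) (n : ℕ) :
    degFall (a + b) lam n =
      ∑ k ∈ range (n + 1), (n.choose k : ℝ) * degFall a lam k * degFall b lam (n - k) := by
  induction n with
  | zero => simp [degFall]
  | succ n ih =>
    have pascal := sum_choose_succ_mul (fun i j => degFall a lam i * degFall b lam j) n
    simp only [← mul_assoc] at pascal
    rw [pascal, degFall_succ, ih, sum_mul, ← sum_add_distrib]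
    refine sum_congr rfl fun k hk => ?_
    have hkn : k ≤ n := Nat.lt_succ_iff.mp (mem_range.mp hk)
    rw [Nat.sub_add_comm hkn, degFall_succ a, degFall_succ b, Nat.cast_sub hkn]
    ring

lemma degFall_affine_eq_eval (μ c lam t : ℝ) (n : ℕ) :
    degFall (μ * t + c) lam n = (∏ i ∈ range n, (C μ * X + C (c - i * lam))).eval t := by
  simp only [degFall, eval_prod, eval_add, eval_mul, eval_C, eval_X]
  exact prod_congr rfl fun i _ => by ring

theorem fwdDiff_iter_degFall_affine_eq_zero (μ c lam : ℝ) {n k : ℕ} (h : n < k) :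
    (Δ_[1])^[k] (fun t => degFall (μ * t + c) lam n) = 0 := by
  set P : ℝ[X] := ∏ i ∈ range n, (C μ * X + C (c - i * lam))
  have hdeg : P.natDegree < k :=
    calc P.natDegree ≤ ∑ i ∈ range n, (C μ * X + C (c - i * lam)).natDegree :=
          natDegree_prod_le _ _
      _ ≤ ∑ _i ∈ range n, 1 := by gcongr; exact natDegree_linear_le
      _ < k := by simpa using h
  rw [show (fun t => degFall (μ * t + c) lam n) = P.eval from
    funext fun t => degFall_affine_eq_eval μ c lam t n]
  exact fwdDiff_iter_eq_zero_of_degree_lt hdeg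

lemma fwdDiff_iter_sum_mul {M R ι : Type*} [AddCommMonoid M] [Ring R] (h : M) (s : Finset ι)
    (c : ι → R) (g : ι → M → R) (n : ℕ) (y : M) :
    (Δ_[h])^[n] (fun t => ∑ k ∈ s, c k * g k t) y = ∑ k ∈ s, c k * (Δ_[h])^[n] (g k) y := by
  have hfun : (fun t => ∑ k ∈ s, c k * g k t) = ∑ k ∈ s, c k • g k := by
    ext t; simp
  simp [hfun]

lemma sum_range_add_pow_div_factorial_mul {K : Type*} [Field K] [CharZero K] {N : ℕ}
    {c : ℕ → K} (hc : ∀ r, N < r → c r = 0) (z w : K) :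
    ∑ r ∈ range (N + 1), (z + w) ^ r / r.factorial * c r =
      ∑ p ∈ range (N + 1), ∑ q ∈ range (N + 1),
        z ^ p / p.factorial * (w ^ q / q.factorial * c (p + q)) := by
  set F : ℕ → ℕ → K := fun p q => z ^ p / p.factorial * (w ^ q / q.factorial * c (p + q))
  have binom (r : ℕ) : (z + w) ^ r / r.factorial * c r = ∑ p ∈ range (r + 1), F p (r - p) := by
    rw [add_pow, sum_div, sum_mul]
    refine sum_congr rfl fun p hp => ?_
    have hpr : p ≤ r := Nat.lt_succ_iff.mp (mem_range.mp hp)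
    have hr : (r.factorial : K) ≠ 0 := Nat.cast_ne_zero.mpr r.factorial_ne_zero
    simp only [F, Nat.cast_choose K hpr, Nat.add_sub_cancel' hpr]
    field_simp
  calc _ = ∑ r ∈ range (N + 1), ∑ p ∈ range (r + 1), F p (r - p) :=
        sum_congr rfl fun r _ => binom r
    _ = ∑ p ∈ range (N + 1), ∑ q ∈ range (N + 1 - p), F p q := sum_range_diag_flip _ F
    _ = _ := by
      refine sum_congr rfl fun p hp => sum_subset (range_subset_range.mpr (Nat.sub_le _ _)) ?_
      intro q hq hq'
      simp only [mem_range] at hp hq hq'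
      simp only [F, hc (p + q) (by omega), mul_zero]

section Umbral

variable {K : Type*} [Field K]

noncomputable def umbralNewton (N : ℕ) (f : K → K) (z : K) : K :=
  ∑ p ∈ range (N + 1), z ^ p / p.factorial * (Δ_[1])^[p] f 0

lemma umbralNewton_sum_mul {ι : Type*} (N : ℕ) (s : Finset ι) (c : ι → K) (g : ι → K → K)
    (z : K) :
    umbralNewton N (fun t => ∑ k ∈ s, c k * g k t) z = ∑ k ∈ s, c k * umbralNewton N (g k) z := by
  simp only [umbralNewton, fwdDiff_iter_sum_mul, mul_sum]
  rw [sum_comm]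
  exact sum_congr rfl fun k _ => sum_congr rfl fun p _ => by ring

lemma umbralNewton_add [CharZero K] {N : ℕ} {G : K → K}
    (hG : ∀ r, N < r → (Δ_[1])^[r] G 0 = 0) (z w : K) :
    umbralNewton N (fun t => umbralNewton N (fun u => G (u + t)) z) w =
      umbralNewton N G (z + w) := by
  have inner (t : K) : umbralNewton N (fun u => G (u + t)) z =
      ∑ p ∈ range (N + 1), z ^ p / p.factorial * (Δ_[1])^[p] G t := by
    simp only [umbralNewton, fwdDiff_iter_comp_add, zero_add]
  simp only [inner]
  simp only [umbralNewton, fwdDiff_iter_sum_mul, ← Function.iterate_add_apply, mul_sum]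
  rw [sum_comm, sum_range_add_pow_div_factorial_mul hG]
  exact sum_congr rfl fun p _ => sum_congr rfl fun q _ => by rw [add_comm q p]; ring

end Umbral

lemma degWhitney_eq_fwdDiff (m : ℕ) (lam : ℝ) (n k : ℕ) :
    degWhitney m lam n k =
      1 / ((m : ℝ) ^ k * k.factorial) * (Δ_[1])^[k] (fun t => degFall (m * t + 1) lam n) 0 := by
  rw [degWhitney, fwdDiff_iter_eq_sum_shift]
  congr 1
  refine sum_congr rfl fun j _ => ?_
  simp only [zsmul_eq_mul, nsmul_eq_mul, mul_one, zero_add]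
  push_cast
  ring

lemma degDowling_eq_umbralNewton (m : ℕ) (lam : ℝ) {n N : ℕ} (h : n ≤ N) (x : ℝ) :
    degDowling m lam n x = umbralNewton N (fun t => degFall (m * t + 1) lam n) (x / m) := by
  rw [degDowling, umbralNewton, ← sum_subset (range_subset_range.mpr (Nat.succ_le_succ h))]
  · refine sum_congr rfl fun k _ => ?_
    rw [degWhitney_eq_fwdDiff]
    -- also for `m = 0`: then `1 / 0ᵏ` and `(x / 0)ᵏ` are both the junk value `0` when `k > 0`
    ring
  · intro k _ hk
    rw [fwdDiff_iter_degFall_affine_eq_zero _ _ _ (by simpa using hk), Pi.zero_apply, mul_zero]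

theorem degDowling_convolution_general (m : ℕ) (lam : ℝ) (n : ℕ) (x y : ℝ) :
    ∑ k ∈ Finset.range (n + 1),
        (n.choose k : ℝ) * degFall 1 lam (n - k) * degDowling m lam k (x + y) =
      ∑ k ∈ Finset.range (n + 1),
        (n.choose k : ℝ) * degDowling m lam (n - k) x * degDowling m lam k y := by
  set f : ℕ → ℝ → ℝ := fun k t => degFall (m * t + 1) lam k
  set G : ℝ → ℝ := fun t => degFall (m * t + 2) lam n
  have hD {k : ℕ} (hk : k ≤ n) (z : ℝ) : degDowling m lam k z = umbralNewton n (f k) (z / m) :=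
    degDowling_eq_umbralNewton m lam hk z
  have hG (r : ℕ) (hr : n < r) : (Δ_[1])^[r] G 0 = 0 := by
    simp only [G, fwdDiff_iter_degFall_affine_eq_zero _ _ _ hr, Pi.zero_apply]
  have hG_eq (t : ℝ) :
      G t = ∑ k ∈ range (n + 1), (n.choose k * degFall 1 lam (n - k)) * f k t := by
    rw [show G t = degFall ((m * t + 1) + 1) lam n by simp only [G]; ring_nf, degFall_add]
    exact sum_congr rfl fun k _ => by ring
  have hG_add (u t : ℝ) :
      G (u + t) = ∑ k ∈ range (n + 1), (n.choose k * f k t) * f (n - k) u := by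
    rw [show G (u + t) = degFall ((m * t + 1) + (m * u + 1)) lam n by simp only [G]; ring_nf,
      degFall_add]
  calc _ = ∑ k ∈ range (n + 1),
          (n.choose k * degFall 1 lam (n - k)) * umbralNewton n (f k) ((x + y) / m) :=
        sum_congr rfl fun k hk => by rw [hD (Nat.le_of_lt_succ (mem_range.mp hk))]
    _ = umbralNewton n G ((x + y) / m) := by
        rw [← umbralNewton_sum_mul]
        congr 1
        exact funext fun t => (hG_eq t).symm
    _ = umbralNewton n (fun t => umbralNewton n (fun u => G (u + t)) (x / m)) (y / m) := by
        rw [add_div, umbralNewton_add hG]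
    _ = ∑ k ∈ range (n + 1),
          (n.choose k * umbralNewton n (f (n - k)) (x / m)) * umbralNewton n (f k) (y / m) := by
        rw [← umbralNewton_sum_mul]
        congr 1
        funext t
        simp only [hG_add, umbralNewton_sum_mul]
        exact sum_congr rfl fun k _ => by ring
    _ = _ := sum_congr rfl fun k hk => by
        rw [hD (Nat.sub_le n k), hD (Nat.le_of_lt_succ (mem_range.mp hk))]

/-- `Σ_{k=0}^n C(n,k) (1)_{n-k,λ} D_{m,λ}(k,x+y) = Σ_{k=0}^n C(n,k) D_{m,λ}(n-k,x) D_{m,λ}(k,y)`. -/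
theorem degDowling_convolution (m : ℕ) (hm : 0 < m) (lam : ℝ) (n : ℕ) (x y : ℝ) :
    ∑ k ∈ Finset.range (n + 1),
        (n.choose k : ℝ) * degFall 1 lam (n - k) * degDowling m lam k (x + y) =
      ∑ k ∈ Finset.range (n + 1),
        (n.choose k : ℝ) * degDowling m lam (n - k) x * degDowling m lam k y :=
  degDowling_convolution_general m lam n x y
end
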